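/- For any graph G with at least one edge, the zero forcing number satisfies Z(G) ≥ δ(G), the minimum degree of G. -/

import Mathlib

open SimpleGraph

section ZF
variable {V : Type*}

/-- One round of the zero forcing color change rule applied to the blue set `S`. -/
def forceStep (G : SimpleGraph V) (S : Set V) : Set V :=
  S ∪ {w | ∃ u ∈ S, G.Adj u w ∧ ∀ x, G.Adj u x → x ∉ S → x = w}

/-- `S` is a zero forcing set: repeatedly applying the color change rule turns all
vertices blue; equivalently every forcing-closed superset of `S` is everything. -/
def IsZeroForcingSet (G : SimpleGraph V) (S : Set V) : Prop :=
  ∀ T : Set V, S ⊆ T → forceStep G T ⊆ T → T = Set.univ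

/-- The zero forcing number `Z(G)`. -/
noncomputable def zeroForcingNumber (G : SimpleGraph V) [Fintype V] : ℕ :=
  sInf {n | ∃ S : Finset V, S.card = n ∧ IsZeroForcingSet G ↑S}

/-- The list `l` enumerates an induced path of `G` (a single vertex counts). -/
def IsListPath (G : SimpleGraph V) (l : List V) : Prop :=
  l.Nodup ∧ ∀ i j : Fin l.length,
    (G.Adj (l.get i) (l.get j) ↔ (i.val + 1 = j.val ∨ j.val + 1 = i.val))

/-- The set `P` induces a path in `G`. -/
def IsInducedPathSet (G : SimpleGraph V) (P : Set V) : Prop :=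
  ∃ l : List V, IsListPath G l ∧ {v | v ∈ l} = P

/-- The path cover number `P(G)`: the minimum number of parts in a partition of the
vertex set into sets each inducing a path. -/
noncomputable def pathCoverNumber (G : SimpleGraph V) [Fintype V] [DecidableEq V] : ℕ :=
  sInf {n | ∃ P : Finpartition (Finset.univ : Finset V),
    P.parts.card = n ∧ ∀ p ∈ P.parts, IsInducedPathSet G ↑p}

/-- `G` is 2-connected: at least 3 vertices, connected, and deleting any vertex
leaves a connected graph. -/
def IsTwoConnected (G : SimpleGraph V) [Fintype V] : Prop :=
  3 ≤ Fintype.card V ∧ G.Connected ∧ ∀ v : V, (G.induce {w : V | w ≠ v}).Connected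

/-- `σ` places the vertices of `G` on a circle (in the order given by `Fin`) so that no
two edges, drawn as chords, cross; this witnesses outerplanarity of `G`. -/
def IsOuterplanarEmbedding (G : SimpleGraph V) [Fintype V]
    (σ : V ≃ Fin (Fintype.card V)) : Prop :=
  ∀ a b c d : V, G.Adj a b → G.Adj c d →
    ¬(σ a < σ c ∧ σ c < σ b ∧ σ b < σ d)

/-- A graph is outerplanar iff its vertices can be placed on a circle with all
edges drawn as pairwise non-crossing chords. -/
def IsOuterplanar (G : SimpleGraph V) [Fintype V] : Prop :=
  ∃ σ : V ≃ Fin (Fintype.card V), IsOuterplanarEmbedding G σ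

/-- `v` is the cyclic successor of `u` among the elements of `F`, with respect to the
circular order induced by `σ`. -/
def nextIn {n : ℕ} (σ : V ≃ Fin n) (F : Finset V) (u v : V) : Prop :=
  u ∈ F ∧ v ∈ F ∧ u ≠ v ∧
    ((σ u < σ v ∧ ∀ w ∈ F, σ u < σ w → σ v ≤ σ w) ∨
     ((∀ w ∈ F, σ w ≤ σ u) ∧ (∀ w ∈ F, σ v ≤ σ w)))

/-- `F` is (the vertex set of) a bounded face of the outerplanar embedding `σ` of the
2-connected outerplanar graph `G`: in the circular order, consecutive members of `F`
are exactly the adjacent pairs inside `F` (so `F` spans a chordless polygon). -/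
def IsFace (G : SimpleGraph V) [Fintype V] (σ : V ≃ Fin (Fintype.card V))
    (F : Finset V) : Prop :=
  3 ≤ F.card ∧ ∀ u ∈ F, ∀ v ∈ F,
    (G.Adj u v ↔ (nextIn σ F u v ∨ nextIn σ F v u))

/-- The weak dual of the embedded outerplanar graph `G`: vertices are the bounded
faces, two faces being adjacent iff they share an edge of `G`. -/
def weakDual (G : SimpleGraph V) [Fintype V] (σ : V ≃ Fin (Fintype.card V)) :
    SimpleGraph {F : Finset V // IsFace G σ F} where
  Adj F₁ F₂ := F₁ ≠ F₂ ∧ ∃ u v, G.Adj u v ∧ u ∈ F₁.1 ∧ u ∈ F₂.1 ∧ v ∈ F₁.1 ∧ v ∈ F₂.1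
  symm := by
    constructor
    rintro F₁ F₂ ⟨hne, u, v, ha, h1, h2, h3, h4⟩
    exact ⟨hne.symm, u, v, ha, h2, h1, h4, h3⟩
  loopless := by constructor; rintro F ⟨hne, -⟩; exact hne rfl

/-- The degree of a face in the weak dual. -/
noncomputable def dualDeg (G : SimpleGraph V) [Fintype V]
    (σ : V ≃ Fin (Fintype.card V)) (F : {F : Finset V // IsFace G σ F}) : ℕ :=
  ((weakDual G σ).neighborSet F).ncard

/-- A leaf face: a face which is a leaf of the weak dual tree. -/
def IsLeafFace (G : SimpleGraph V) [Fintype V] (σ : V ≃ Fin (Fintype.card V))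
    (F : {F : Finset V // IsFace G σ F}) : Prop :=
  dualDeg G σ F = 1

/-- `n_ℓ`: the number of leaves of the weak dual. -/
noncomputable def numDualLeaves (G : SimpleGraph V) [Fintype V]
    (σ : V ≃ Fin (Fintype.card V)) : ℕ :=
  Nat.card {F : {F : Finset V // IsFace G σ F} // IsLeafFace G σ F}

end ZF

section FT
variable {V : Type*} [Fintype V]

/-- Branch faces: faces of weak-dual degree 2 that are adjacent to a leaf face or to
another branch face. -/
inductive IsBranchFace (G : SimpleGraph V) (σ : V ≃ Fin (Fintype.card V)) :
    {F : Finset V // IsFace G σ F} → Prop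
  | leaf (F F' : {F : Finset V // IsFace G σ F}) :
      dualDeg G σ F = 2 → (weakDual G σ).Adj F F' → IsLeafFace G σ F' →
      IsBranchFace G σ F
  | branch (F F' : {F : Finset V // IsFace G σ F}) :
      dualDeg G σ F = 2 → (weakDual G σ).Adj F F' → IsBranchFace G σ F' →
      IsBranchFace G σ F

/-- Limb faces: faces of weak-dual degree at least 3 adjacent to a leaf or branch face. -/
def IsLimbFace (G : SimpleGraph V) (σ : V ≃ Fin (Fintype.card V))
    (F : {F : Finset V // IsFace G σ F}) : Prop :=
  3 ≤ dualDeg G σ F ∧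
    ∃ F', (weakDual G σ).Adj F F' ∧ (IsLeafFace G σ F' ∨ IsBranchFace G σ F')

/-- Trunk faces: faces of weak-dual degree at least 2 that are adjacent to no leaf
face and no branch face. -/
def IsTrunkFace (G : SimpleGraph V) (σ : V ≃ Fin (Fintype.card V))
    (F : {F : Finset V // IsFace G σ F}) : Prop :=
  2 ≤ dualDeg G σ F ∧
    ∀ F', (weakDual G σ).Adj F F' → ¬(IsLeafFace G σ F' ∨ IsBranchFace G σ F')

/-- The vertices of the foliage of `G`: vertices lying on a leaf, branch, or limb face. -/
def foliageSet (G : SimpleGraph V) (σ : V ≃ Fin (Fintype.card V)) : Set V :=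
  {v | ∃ F : {F : Finset V // IsFace G σ F},
    (IsLeafFace G σ F ∨ IsBranchFace G σ F ∨ IsLimbFace G σ F) ∧ v ∈ F.1}

/-- The vertices of the trunk of `G`: vertices lying on a trunk face. -/
def trunkSet (G : SimpleGraph V) (σ : V ≃ Fin (Fintype.card V)) : Set V :=
  {v | ∃ F : {F : Finset V // IsFace G σ F}, IsTrunkFace G σ F ∧ v ∈ F.1}

/-- Boundary vertices: vertices in both the foliage and the trunk. -/
def boundarySet (G : SimpleGraph V) (σ : V ≃ Fin (Fintype.card V)) : Set V :=
  foliageSet G σ ∩ trunkSet G σ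

end FT

/-! If a zero forcing set `S` is the whole vertex set, then `δ(G) < |V| = |S|`. Otherwise some
vertex `u ∈ S` performs a force `u → w`, so every neighbour of `u` other than `w` is already in
`S`; hence `δ(G) ≤ deg u ≤ |S \ {u}| + 1 = |S|`. -/

open Finset

namespace SimpleGraph

variable {V : Type*} [Fintype V] {G : SimpleGraph V}

theorem minDegree_le_card_verts [DecidableRel G.Adj] : G.minDegree ≤ Fintype.card V := by
  cases isEmpty_or_nonempty V
  · simp [minDegree_of_subsingleton]
  · exact G.minDegree_lt_card.le

theorem degree_le_card_of_forall_adj_notMem_eq [DecidableRel G.Adj] [DecidableEq V]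
    {S : Finset V} {u w : V} (hu : u ∈ S) (hforce : ∀ x, G.Adj u x → x ∉ S → x = w) :
    G.degree u ≤ #S := by
  have hsub : G.neighborFinset u ⊆ insert w (S.erase u) := by
    intro x hx
    rw [mem_neighborFinset] at hx
    by_cases hxS : x ∈ S
    · exact mem_insert_of_mem (mem_erase.mpr ⟨hx.ne', hxS⟩)
    · exact mem_insert.mpr (Or.inl (hforce x hx hxS))
  calc G.degree u = #(G.neighborFinset u) := (card_neighborFinset_eq_degree G u).symm
    _ ≤ #(insert w (S.erase u)) := card_le_card hsub
    _ ≤ #(S.erase u) + 1 := card_insert_le _ _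
    _ = #S := card_erase_add_one hu

end SimpleGraph

open SimpleGraph

theorem isZeroForcingSet_univ {V : Type*} (G : SimpleGraph V) : IsZeroForcingSet G Set.univ :=
  fun _ hT _ => Set.univ_subset_iff.mp hT

theorem IsZeroForcingSet.minDegree_le_card {V : Type*} [Fintype V] {G : SimpleGraph V}
    [DecidableRel G.Adj] {S : Finset V} (hS : IsZeroForcingSet G S) : G.minDegree ≤ #S := by
  classical
  by_cases hclosed : forceStep G S ⊆ S
  · have hS_univ : S = univ := coe_eq_univ.mp (hS S subset_rfl hclosed)
    rw [hS_univ, card_univ]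
    exact minDegree_le_card_verts
  · obtain ⟨w, hwS | ⟨u, hu, -, hforce⟩, hwS'⟩ := Set.not_subset.mp hclosed
    · exact absurd hwS hwS'
    · exact (G.minDegree_le_degree u).trans (degree_le_card_of_forall_adj_notMem_eq hu hforce)

theorem minDegree_le_zeroForcingNumber_general {V : Type*} [Fintype V] (G : SimpleGraph V)
    [DecidableRel G.Adj] :
    G.minDegree ≤ zeroForcingNumber G := by
  refine le_csInf ⟨_, univ, rfl, by simpa using isZeroForcingSet_univ G⟩ ?_
  rintro n ⟨S, rfl, hS⟩
  exact hS.minDegree_le_card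

/-- For any graph `G` with at least one edge, `Z(G) ≥ δ(G)`. -/
theorem minDegree_le_zeroForcingNumber {V : Type*} [Fintype V] (G : SimpleGraph V)
    [DecidableRel G.Adj] (h : ∃ u v, G.Adj u v) :
    G.minDegree ≤ zeroForcingNumber G :=
  minDegree_le_zeroForcingNumber_general G
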